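/- For every prime p > 5, ∑_{k=1}^{p-1} k⁵ H_k² ≡ −(77/1200) p − 1/30 (mod p²), as rationals with denominators coprime to p. -/

import Mathlib

open Finset

/-- Harmonic number `H n = ∑_{j=1}^n 1/j`. -/
def H (n : ℕ) : ℚ := ∑ j ∈ Finset.Icc 1 n, (1 : ℚ) / j

/-- Generalized harmonic number `H_n^{(α)} = ∑_{i=1}^n 1/i^α`. -/
def Hgen (n α : ℕ) : ℚ := ∑ i ∈ Finset.Icc 1 n, (1 : ℚ) / (i : ℚ) ^ α

/-- `S m = ∑_{r=0}^m C(m+1,r) B_r B_{m-r}`. -/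
def S (m : ℕ) : ℚ := ∑ r ∈ Finset.range (m + 1),
  ((m + 1).choose r : ℚ) * bernoulli r * bernoulli (m - r)

/-!
Summation by parts gives a closed form `∑_{k ≤ n} k⁵ H_k² = c₂(n) H_n² + c₁(n) H_n + c₀(n)` with
polynomials `cᵢ ∈ ℚ[n]`. Take `n = p - 1`. Since the inverses of `1, …, p - 1` sum to `0` modulo `p`,
`H_n = p a / n!` with `a ∈ ℤ`. Now `c₂` carries the factor `(n + 1)² = p²`, `c₁` vanishes at
`n = -1`, and `c₀(n) + 77/1200 (n + 1) + 1/30` vanishes to second order there, so the difference of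
the two sides is `p²` times a rational whose denominator divides `21600 (p - 1)!²`, prime to `p`.
-/

open scoped Nat

namespace ZMod

theorem sum_range_natCast {M : Type*} [AddCommMonoid M] (n : ℕ) [NeZero n]
    (f : ZMod n → M) : ∑ k ∈ range n, f k = ∑ x, f x := by
  obtain ⟨m, rfl⟩ : ∃ m, n = m + 1 := Nat.exists_eq_succ_of_ne_zero (NeZero.ne n)
  rw [← Fin.sum_univ_eq_sum_range (fun k => f k)]
  exact Fintype.sum_congr _ _ fun x => congrArg f (natCast_zmod_val (n := m + 1) x)

variable {p : ℕ} [Fact p.Prime]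

theorem sum_inv_eq_zero (hp : p ≠ 2) : ∑ x : ZMod p, x⁻¹ = 0 := by
  have hcard : 1 < Fintype.card (ZMod p) - 1 := by
    have := (Fact.out : p.Prime).two_le
    rw [card]
    omega
  calc ∑ x : ZMod p, x⁻¹ = ∑ x : ZMod p, x := inv_involutive.bijective.sum_comp id
    _ = 0 := by simpa using FiniteField.sum_pow_lt_card_sub_one (K := ZMod p) 1 hcard

theorem sum_Icc_inv_eq_zero (hp : p ≠ 2) : ∑ k ∈ Icc 1 (p - 1), (k : ZMod p)⁻¹ = 0 := by
  have hp0 : 0 < p := (Fact.out : p.Prime).pos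
  rw [← sum_inv_eq_zero hp, ← sum_range_natCast p (·⁻¹), range_eq_Ico,
    sum_eq_sum_Ico_succ_bot hp0, Nat.cast_zero, inv_zero, zero_add,
    Icc_sub_one_right_eq_Ico_of_not_isMin (by simpa using hp0.ne')]

end ZMod

theorem Rat.dvd_num_of_mul_eq {q : ℚ} {m d a : ℤ} (hmd : IsCoprime m d) (h : q * d = m * a) :
    m ∣ q.num := by
  refine hmd.dvd_of_dvd_mul_right ⟨a * q.den, ?_⟩
  have : (q.num : ℚ) * d = m * (a * q.den) := by
    rw [← q.mul_den_eq_num, mul_right_comm, h, mul_assoc]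
  exact_mod_cast this

lemma H_succ (n : ℕ) : H (n + 1) = H n + 1 / ((n : ℚ) + 1) := by
  rw [H, H, sum_Icc_succ_top (by omega : 1 ≤ n + 1)]
  push_cast
  ring

theorem H_mul_factorial (n : ℕ) : H n * n ! = ((∑ k ∈ Icc 1 n, n ! / k : ℕ) : ℚ) := by
  rw [H, sum_mul, Nat.cast_sum]
  refine sum_congr rfl fun k hk => ?_
  have hk : 1 ≤ k ∧ k ≤ n := mem_Icc.mp hk
  rw [Nat.cast_div (Nat.dvd_factorial hk.1 hk.2) (Nat.cast_ne_zero.mpr (by omega))]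
  ring

theorem exists_H_sub_one_mul_factorial_eq {p : ℕ} (hp : p.Prime) (hp2 : p ≠ 2) :
    ∃ a : ℤ, H (p - 1) * (p - 1)! = p * a := by
  have : Fact p.Prime := ⟨hp⟩
  suffices hdvd : p ∣ ∑ k ∈ Icc 1 (p - 1), (p - 1)! / k by
    obtain ⟨a, ha⟩ := hdvd
    exact ⟨a, by rw [H_mul_factorial, ha]; push_cast; rfl⟩
  rw [← ZMod.natCast_eq_zero_iff, Nat.cast_sum,
    ← mul_zero ((p - 1)! : ZMod p), ← ZMod.sum_Icc_inv_eq_zero hp2, mul_sum]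
  refine sum_congr rfl fun k hk => ?_
  have hk : 1 ≤ k ∧ k ≤ p - 1 := mem_Icc.mp hk
  have hk0 : (k : ZMod p) ≠ 0 := by
    rw [Ne, ZMod.natCast_eq_zero_iff]
    exact fun h => absurd (Nat.le_of_dvd hk.1 h) (by omega)
  rw [Nat.cast_div (Nat.dvd_factorial hk.1 hk.2) hk0, div_eq_mul_inv]

theorem sum_Icc_pow_five_mul_H_sq (n : ℕ) : ∑ k ∈ Icc 1 n, (k : ℚ) ^ 5 * H k ^ 2 =
    (n : ℚ) ^ 2 * ((n : ℚ) + 1) ^ 2 * (2 * (n : ℚ) ^ 2 + 2 * (n : ℚ) - 1) / 12 * H n ^ 2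
    + ((n : ℚ) / 20 - 7 * (n : ℚ) ^ 2 / 72 - (n : ℚ) ^ 3 / 12 + 11 * (n : ℚ) ^ 4 / 72
        + (n : ℚ) ^ 5 / 30 - (n : ℚ) ^ 6 / 18) * H n
    + (119 * (n : ℚ) / 3600 - 31 * (n : ℚ) ^ 2 / 864 - (n : ℚ) ^ 3 / 240
        + 43 * (n : ℚ) ^ 4 / 4320 - 11 * (n : ℚ) ^ 5 / 900 + (n : ℚ) ^ 6 / 108) := by
  induction n with
  | zero => simp [H]
  | succ n ih =>
    rw [sum_Icc_succ_top (by omega : 1 ≤ n + 1), ih, H_succ]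
    have : (n : ℚ) + 1 ≠ 0 := by positivity
    push_cast
    field_simp
    ring

theorem exists_sum_Icc_pow_five_mul_H_sq_sub_mul_eq (n : ℕ) (a : ℤ)
    (ha : H n * n ! = (n + 1) * a) : ∃ A : ℤ,
    ((∑ k ∈ Icc 1 n, (k : ℚ) ^ 5 * H k ^ 2) - (-(77 / 1200) * ((n : ℚ) + 1) - 1 / 30))
      * (21600 * n ! ^ 2) = ((n : ℚ) + 1) ^ 2 * A := by
  refine ⟨1800 * n ^ 2 * (n + 1) ^ 2 * (2 * n ^ 2 + 2 * n - 1) * a ^ 2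
    + (-1200 * n ^ 5 + 1920 * n ^ 4 + 1380 * n ^ 3 - 3180 * n ^ 2 + 1080 * n) * a * n !
    + (6425 - 7590 * (n + 1) + 4535 * (n + 1) ^ 2 - 1464 * (n + 1) ^ 3 + 200 * (n + 1) ^ 4)
      * (n ! : ℤ) ^ 2, ?_⟩
  have hfac : (n ! : ℚ) ≠ 0 := by positivity
  rw [sum_Icc_pow_five_mul_H_sq, eq_div_of_mul_eq hfac ha]
  push_cast
  field_simp
  ring

theorem stmt14 (p : ℕ) (hp : p.Prime) (hp5 : 5 < p) :
    (p : ℤ) ^ 2 ∣ ((∑ k ∈ Finset.Icc 1 (p - 1), (k : ℚ) ^ 5 * H k ^ 2)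
      - (-(77 / 1200) * (p : ℚ) - 1 / 30)).num := by
  obtain ⟨a, ha⟩ := exists_H_sub_one_mul_factorial_eq hp (by omega)
  obtain ⟨n, rfl⟩ : ∃ n, p = n + 1 := ⟨p - 1, by omega⟩
  rw [Nat.add_sub_cancel] at ha ⊢
  have hdvd : 21600 * n ! ^ 2 ∣ n ! ^ 5 :=
    calc 21600 * n ! ^ 2 ∣ 5 ! ^ 3 * n ! ^ 2 :=
          mul_dvd_mul_right (by norm_num [Nat.factorial]) _
      _ ∣ n ! ^ 3 * n ! ^ 2 :=
          mul_dvd_mul_right (pow_dvd_pow_of_dvd (Nat.factorial_dvd_factorial (by omega)) 3) _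
      _ = n ! ^ 5 := by ring
  have hcop : IsCoprime (((n + 1 : ℕ) : ℤ) ^ 2) (21600 * (n ! : ℤ) ^ 2) := by
    refine IsCoprime.pow_left (Nat.isCoprime_iff_coprime.mpr ?_)
    exact_mod_cast ((hp.coprime_factorial_of_lt (by omega)).pow_right 5).coprime_dvd_right hdvd
  obtain ⟨A, hA⟩ := exists_sum_Icc_pow_five_mul_H_sq_sub_mul_eq n a (by exact_mod_cast ha)
  exact Rat.dvd_num_of_mul_eq hcop (by push_cast; exact hA)
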